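/- arXiv:1711.10058 — 4 statements merged into one kernel-verified Lean document; each statement's English description precedes it below -/
import Mathlib

section
/- Let X be an n×p real matrix, σ² > 0, and for u ∈ ℝ^p let C(u) = diag(e^{u_1},…,e^{u_p}). Then the function u ↦ log det(X C(u) X^T + σ² I) is convex on ℝ^p. -/
/-!
With `K = σ⁻² XᵀX`, Sylvester's identity gives
`det (X C(u) Xᵀ + σ² I) = σ^(2n) det (I + C(u) K)`, and expanding `det (I + C(u) K)`
multilinearly in its rows gives `∑_S exp (∑_{i ∈ S} u_i) · det K_S`, where `K_S` runs over the
principal submatrices of `K`. These minors are nonnegative because `K` is positive semidefinite,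
and the logarithm of any nonnegative combination of exponentials of convex functions is convex,
by Hölder's inequality.
-/

open Matrix Finset Real

theorem Real.sum_rpow_mul_rpow_le {ι : Type*} (s : Finset ι) {F G : ι → ℝ}
    (hF : ∀ i ∈ s, 0 ≤ F i) (hG : ∀ i ∈ s, 0 ≤ G i) {a b : ℝ} (ha : 0 < a) (hb : 0 < b)
    (hab : a + b = 1) :
    ∑ i ∈ s, F i ^ a * G i ^ b ≤ (∑ i ∈ s, F i) ^ a * (∑ i ∈ s, G i) ^ b := by
  have key := inner_le_Lp_mul_Lq_of_nonneg s (holderConjugate_one_div ha hb hab)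
    (fun i hi => rpow_nonneg (hF i hi) a) (fun i hi => rpow_nonneg (hG i hi) b)
  have cancel : ∀ {c x : ℝ}, 0 < c → 0 ≤ x → (x ^ c) ^ (1 / c) = x := fun hc hx => by
    rw [← rpow_mul hx, mul_one_div_cancel hc.ne', rpow_one]
  rwa [sum_congr rfl fun i hi => cancel ha (hF i hi),
    sum_congr rfl fun i hi => cancel hb (hG i hi), one_div_one_div, one_div_one_div] at key

theorem convexOn_log_sum_mul_exp {E ι : Type*} [AddCommGroup E] [Module ℝ E] [Fintype ι]
    {s : Set E} (hs : Convex ℝ s) {c : ι → ℝ} (hc : ∀ i, 0 ≤ c i) {f : ι → E → ℝ}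
    (hf : ∀ i, ConvexOn ℝ s (f i)) :
    ConvexOn ℝ s (fun x => log (∑ i, c i * exp (f i x))) := by
  by_cases hpos : ∃ i, 0 < c i
  swap
  · have hzero : ∀ i, c i = 0 := fun i => le_antisymm (not_lt.1 fun h => hpos ⟨i, h⟩) (hc i)
    simpa [hzero] using convexOn_const (0 : ℝ) hs
  obtain ⟨j, hj⟩ := hpos
  have hsum_pos : ∀ x, 0 < ∑ i, c i * exp (f i x) := fun x =>
    sum_pos' (fun i _ => mul_nonneg (hc i) (exp_pos _).le)
      ⟨j, mem_univ j, mul_pos hj (exp_pos _)⟩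
  refine convexOn_iff_forall_pos.2 ⟨hs, fun x hx y hy a b ha hb hab => ?_⟩
  have hterm : ∀ i, c i * exp (f i (a • x + b • y))
      ≤ (c i * exp (f i x)) ^ a * (c i * exp (f i y)) ^ b := fun i => by
    rw [mul_rpow (hc i) (exp_pos _).le, mul_rpow (hc i) (exp_pos _).le, mul_mul_mul_comm,
      ← rpow_add' (hc i) (by linarith), hab, rpow_one, ← exp_mul, ← exp_mul, ← exp_add,
      mul_comm (f i x), mul_comm (f i y)]
    exact mul_le_mul_of_nonneg_left (exp_le_exp.2 ((hf i).2 hx hy ha.le hb.le hab)) (hc i)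
  calc log (∑ i, c i * exp (f i (a • x + b • y)))
      ≤ log ((∑ i, c i * exp (f i x)) ^ a * (∑ i, c i * exp (f i y)) ^ b) := by
        gcongr
        · exact hsum_pos _
        · exact (sum_le_sum fun i _ => hterm i).trans (Real.sum_rpow_mul_rpow_le _
            (fun i _ => mul_nonneg (hc i) (exp_pos _).le)
            (fun i _ => mul_nonneg (hc i) (exp_pos _).le) ha hb hab)
    _ = a • log (∑ i, c i * exp (f i x)) + b • log (∑ i, c i * exp (f i y)) := by
        rw [log_mul (rpow_pos_of_pos (hsum_pos x) a).ne' (rpow_pos_of_pos (hsum_pos y) b).ne',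
          log_rpow (hsum_pos x), log_rpow (hsum_pos y), smul_eq_mul, smul_eq_mul]

theorem Matrix.det_mul_mul_add_smul_one {m n K : Type*} [Fintype m] [DecidableEq m] [Fintype n]
    [DecidableEq n] [Field K] (X : Matrix m n K) (D : Matrix n n K) (Y : Matrix n m K) {σ : K}
    (hσ : σ ≠ 0) :
    (X * D * Y + σ • 1).det = σ ^ Fintype.card m * (1 + D * (σ⁻¹ • (Y * X))).det := by
  have hfactor : X * D * Y + σ • 1 = σ • (1 + X * (σ⁻¹ • (D * Y))) := by
    rw [smul_add, Matrix.mul_smul, smul_smul, mul_inv_cancel₀ hσ, one_smul, Matrix.mul_assoc,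
      add_comm]
  rw [hfactor, det_smul, det_one_add_mul_comm, smul_mul, Matrix.mul_assoc, Matrix.mul_smul]

theorem Matrix.det_of_ite_mem_one {ι R : Type*} [Fintype ι] [DecidableEq ι] [CommRing R]
    (K : Matrix ι ι R) (s : Finset ι) :
    (of fun i j => if i ∈ s then K i j else (1 : Matrix ι ι R) i j).det
      = (K.submatrix ((↑) : s → ι) (↑)).det := by
  have hblocks : (of fun i j => if i ∈ s then K i j else (1 : Matrix ι ι R) i j).submatrix
      (Equiv.sumCompl (· ∈ s)) (Equiv.sumCompl (· ∈ s))
      = fromBlocks (K.submatrix (↑) (↑)) (of fun (i : s) (j : {x // x ∉ s}) => K i j)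
          0 1 := by
    ext (i | i) (j | j)
    · simp
    · simp
    · have hij : (i : ι) ≠ j := fun h => i.2 (h ▸ j.2)
      simp [i.2, one_apply_ne hij]
    · simp [i.2, one_apply, Subtype.ext_iff]
  rw [← det_submatrix_equiv_self (Equiv.sumCompl (· ∈ s)), hblocks, det_fromBlocks_zero₂₁,
    det_one, mul_one]

theorem Matrix.det_one_add_diagonal_mul {ι R : Type*} [Fintype ι] [DecidableEq ι] [CommRing R]
    (d : ι → R) (K : Matrix ι ι R) :
    (1 + diagonal d * K).det
      = ∑ s : Finset ι, (∏ i ∈ s, d i) * (K.submatrix ((↑) : s → ι) (↑)).det := by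
  have hrows : 1 + diagonal d * K = (fun i => d i • K i) + fun i => (1 : Matrix ι ι R) i := by
    ext i j
    simp [diagonal_mul, add_comm]
  rw [hrows]
  change detRowAlternating _ = _
  rw [detRowAlternating.map_add_univ]
  refine sum_congr rfl fun s _ => ?_
  set M : ι → ι → R := fun i j => if i ∈ s then K i j else (1 : Matrix ι ι R) i j
  have hpiece : s.piecewise (fun i => d i • K i) (fun i => (1 : Matrix ι ι R) i)
      = s.piecewise (fun i => d i • M i) M := by
    ext i j
    by_cases hi : i ∈ s <;> simp [M, hi]
  rw [hpiece, ← det_of_ite_mem_one, ← smul_eq_mul]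
  exact detRowAlternating.toMultilinearMap.map_piecewise_smul d M s

theorem logdet_convex {n p : ℕ} (X : Matrix (Fin n) (Fin p) ℝ) (σ2 : ℝ) (hσ : 0 < σ2) :
    ConvexOn ℝ Set.univ (fun u : Fin p → ℝ =>
      Real.log (Matrix.det
        (X * Matrix.diagonal (fun i => Real.exp (u i)) * Xᵀ + σ2 • (1 : Matrix (Fin n) (Fin n) ℝ)))) := by
  set K := σ2⁻¹ • (Xᵀ * X)
  have hK : K.PosSemidef := by
    simpa using (posSemidef_conjTranspose_mul_self X).smul (inv_nonneg.2 hσ.le)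
  have hdet : ∀ u : Fin p → ℝ,
      (X * diagonal (fun i => exp (u i)) * Xᵀ + σ2 • (1 : Matrix (Fin n) (Fin n) ℝ)).det
        = ∑ s : Finset (Fin p),
            (σ2 ^ n * (K.submatrix ((↑) : s → Fin p) (↑)).det) * exp (∑ i ∈ s, u i) := by
    intro u
    rw [det_mul_mul_add_smul_one _ _ _ hσ.ne', det_one_add_diagonal_mul, Fintype.card_fin,
      mul_sum]
    refine sum_congr rfl fun s _ => ?_
    rw [exp_sum]
    ring
  have hlinear : ∀ s : Finset (Fin p),
      ConvexOn ℝ Set.univ fun u : Fin p → ℝ => ∑ i ∈ s, u i :=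
    fun s => ⟨convex_univ, fun x _ y _ a b _ _ _ => by simp [sum_add_distrib, mul_sum]⟩
  simp_rw [hdet]
  exact convexOn_log_sum_mul_exp convex_univ
    (fun s => mul_nonneg (by positivity) (hK.submatrix _).det_nonneg) hlinear
end

section
/- For any u ∈ ℝ^p, the Hessian of u ↦ log det(V + diag(e^{-u})) equals the Hadamard product of V(diag(e^u)V + I)^{-1} and (diag(e^{-u}) + V)^{-1}, and this Hadamard product is positive semidefinite whenever both factors are positive semidefinite. -/
/-!
By Jacobi's formula, `∂ⱼ log det M = tr (M⁻¹ ∂ⱼ M) = -e^{-wⱼ} (M⁻¹)ⱼⱼ` for `M = V + diag(e^{-w})`.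
Differentiating once more with `d(M⁻¹) = -M⁻¹ (dM) M⁻¹` and the symmetry of `B = M⁻¹` gives the
Hessian entry `δᵢⱼ e^{-uᵢ} Bᵢⱼ - e^{-uᵢ} e^{-uⱼ} Bᵢⱼ²`, i.e. `((D - D B D) ⊙ B)ᵢⱼ` with
`D = diag(e^{-u})`. Finally `diag(eᵘ) V + 1 = D⁻¹ M`, so `V (diag(eᵘ) V + 1)⁻¹ = (M - D) M⁻¹ D
= D - D B D`. Positive semidefiniteness of Hadamard products is Schur's product theorem.
-/

open Matrix Real

section

-- Any norm on matrices gives the same derivatives; the operator norm makes `Matrix n n 𝕜` a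
-- normed algebra, which the derivative of the inverse needs.
open scoped Matrix.Norms.Operator

namespace Matrix

section Apply

variable {𝕜 E m n : Type*} [RCLike 𝕜] [NormedAddCommGroup E] [NormedSpace 𝕜 E] [Fintype m]
  [Fintype n] {M : E → Matrix m n 𝕜} {x : E}

theorem _root_.DifferentiableAt.matrix_apply (hM : DifferentiableAt 𝕜 M x) (i : m) (j : n) :
    DifferentiableAt 𝕜 (fun x => M x i j) x :=
  (LinearMap.toContinuousLinearMap (entryLinearMap 𝕜 𝕜 i j)).differentiableAt.comp x hM

theorem fderiv_matrix_apply (hM : DifferentiableAt 𝕜 M x) (i : m) (j : n) (h : E) :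
    fderiv 𝕜 (fun x => M x i j) x h = fderiv 𝕜 M x h i j :=
  congrArg (· h) ((LinearMap.toContinuousLinearMap (entryLinearMap 𝕜 𝕜 i j)).hasFDerivAt.comp x
    hM.hasFDerivAt).fderiv

end Apply

variable {n : Type*} [Fintype n] [DecidableEq n]

theorem hasDerivAt_det_one_add_smul {𝕜 : Type*} [NontriviallyNormedField 𝕜] (N : Matrix n n 𝕜) :
    HasDerivAt (fun t : 𝕜 => det (1 + t • N)) (trace N) 0 := by
  set q := (det (1 + (Polynomial.X : Polynomial 𝕜) • N.map Polynomial.C)).divX.divX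
  have hexpand : (fun t : 𝕜 => det (1 + t • N)) = fun t => 1 + trace N * t + q.eval t * t ^ 2 :=
    funext fun t => det_one_add_smul t N
  have h : HasDerivAt (fun t : 𝕜 => 1 + trace N * t + q.eval t * t ^ 2) (trace N) 0 := by
    refine ((((hasDerivAt_id' (0 : 𝕜)).const_mul (trace N)).const_add 1).fun_add
      ((q.hasDerivAt 0).fun_mul ((hasDerivAt_id' (0 : 𝕜)).fun_pow 2))).congr_deriv ?_
    simp
  rwa [hexpand]

theorem hasDerivAt_det_add_smul {𝕜 : Type*} [NontriviallyNormedField 𝕜] {A : Matrix n n 𝕜}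
    (hA : IsUnit A.det) (H : Matrix n n 𝕜) :
    HasDerivAt (fun t : 𝕜 => det (A + t • H)) (det A * trace (A⁻¹ * H)) 0 := by
  have hfactor (t : 𝕜) : A + t • H = A * (1 + t • (A⁻¹ * H)) := by
    rw [mul_add, mul_one, mul_smul_comm, mul_nonsing_inv_cancel_left _ _ hA]
  simp_rw [hfactor, det_mul]
  exact (hasDerivAt_det_one_add_smul _).const_mul _

section Calculus

variable {𝕜 E : Type*} [RCLike 𝕜] [NormedAddCommGroup E] [NormedSpace 𝕜 E]
  {M : E → Matrix n n 𝕜} {x : E}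

theorem differentiable_det : Differentiable 𝕜 (det : Matrix n n 𝕜 → 𝕜) := by
  have hentry (i j : n) : Differentiable 𝕜 fun A : Matrix n n 𝕜 => A i j :=
    (LinearMap.toContinuousLinearMap (entryLinearMap 𝕜 𝕜 i j)).differentiable
  simp only [funext det_apply, Units.smul_def, zsmul_eq_mul]
  fun_prop

theorem fderiv_det_apply {A : Matrix n n 𝕜} (hA : IsUnit A.det) (H : Matrix n n 𝕜) :
    fderiv 𝕜 det A H = A.det * trace (A⁻¹ * H) :=
  ((differentiable_det A).lineDeriv_eq_fderiv).symm.trans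
    (HasLineDerivAt.lineDeriv (hasDerivAt_det_add_smul hA H))

theorem _root_.DifferentiableAt.matrix_inv (hM : DifferentiableAt 𝕜 M x) (hx : IsUnit (M x).det) :
    DifferentiableAt 𝕜 (fun x => (M x)⁻¹) x := by
  simp only [nonsing_inv_eq_ringInverse]
  exact hM.inverse ((isUnit_iff_isUnit_det _).2 hx)

theorem fderiv_matrix_inv_apply (hM : DifferentiableAt 𝕜 M x) (hx : IsUnit (M x).det) (h : E) :
    fderiv 𝕜 (fun x => (M x)⁻¹) x h = -((M x)⁻¹ * fderiv 𝕜 M x h * (M x)⁻¹) := by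
  have hu : IsUnit (M x) := (isUnit_iff_isUnit_det _).2 hx
  have hinv := (hasFDerivAt_ringInverse (𝕜 := 𝕜) hu.unit).comp x hM.hasFDerivAt
  simp only [Function.comp_def, ← nonsing_inv_eq_ringInverse, coe_units_inv, hu.unit_spec] at hinv
  exact congrArg (· h) hinv.fderiv

end Calculus

theorem fderiv_log_det_apply {E : Type*} [NormedAddCommGroup E] [NormedSpace ℝ E]
    {M : E → Matrix n n ℝ} {x : E} (hM : DifferentiableAt ℝ M x) (hx : (M x).det ≠ 0) (h : E) :
    fderiv ℝ (fun x => log (M x).det) x h = trace ((M x)⁻¹ * fderiv ℝ M x h) := by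
  have hdet : DifferentiableAt ℝ (fun x => (M x).det) x := (differentiable_det _).comp x hM
  rw [fderiv.log hdet hx, fderiv_fun_comp _ (differentiable_det _) hM]
  simp only [_root_.smul_apply, ContinuousLinearMap.comp_apply, smul_eq_mul]
  field_simp
  exact fderiv_det_apply hx.isUnit _

theorem mul_inv_mul_add_one_eq_sub {R : Type*} [CommRing R] {V D E : Matrix n n R}
    (hED : E * D = 1) (hVD : IsUnit (V + D).det) : V * (E * V + 1)⁻¹ = D - D * (V + D)⁻¹ * D := by
  have hE : E⁻¹ = D := inv_eq_right_inv hED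
  have hfactor : E * V + 1 = E * (V + D) := by rw [mul_add, hED]
  calc V * (E * V + 1)⁻¹ = ((V + D) - D) * (V + D)⁻¹ * D := by
        rw [hfactor, Matrix.mul_inv_rev, hE, add_sub_cancel_right, Matrix.mul_assoc]
    _ = D - D * (V + D)⁻¹ * D := by
        rw [Matrix.sub_mul, Matrix.sub_mul, mul_nonsing_inv _ hVD, Matrix.one_mul]

end Matrix

variable {n : Type*} [DecidableEq n]

theorem posDef_add_diagonal_exp_neg {V : Matrix n n ℝ} (hV : V.PosSemidef) (w : n → ℝ) :
    (V + diagonal fun k => exp (-w k)).PosDef :=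
  PosDef.posSemidef_add hV (posDef_diagonal_iff.2 fun _ => exp_pos _)

variable [Fintype n]

theorem hasFDerivAt_add_diagonal_exp_neg (V : Matrix n n ℝ) (w : n → ℝ) :
    HasFDerivAt (fun w : n → ℝ => V + diagonal fun k => exp (-w k))
      ((LinearMap.toContinuousLinearMap (diagonalLinearMap n ℝ ℝ)).comp
        (ContinuousLinearMap.pi fun k => -(exp (-w k) • ContinuousLinearMap.proj k))) w := by
  have hexp : HasFDerivAt (fun (w : n → ℝ) k => exp (-w k))
      (ContinuousLinearMap.pi fun k => -(exp (-w k) • ContinuousLinearMap.proj k)) w :=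
    hasFDerivAt_pi.2 fun k => by simpa using ((hasFDerivAt_apply k w).neg).exp
  exact ((LinearMap.toContinuousLinearMap (diagonalLinearMap n ℝ ℝ)).hasFDerivAt.comp w
    hexp).const_add V

theorem fderiv_add_diagonal_exp_neg_single (V : Matrix n n ℝ) (w : n → ℝ) (i : n) :
    fderiv ℝ (fun w : n → ℝ => V + diagonal fun k => exp (-w k)) w (Pi.single i 1)
      = diagonal (Pi.single i (-exp (-w i))) := by
  rw [(hasFDerivAt_add_diagonal_exp_neg V w).fderiv]
  ext a b
  by_cases ha : a = i <;> simp [diagonal_apply, Pi.single_apply, ha]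

theorem fderiv_log_det_add_diagonal_exp_neg {V : Matrix n n ℝ} (hV : V.PosSemidef) (w : n → ℝ)
    (j : n) :
    fderiv ℝ (fun w => log (V + diagonal fun k => exp (-w k)).det) w (Pi.single j 1)
      = -(exp (-w j) * (V + diagonal fun k => exp (-w k))⁻¹ j j) := by
  rw [fderiv_log_det_apply (hasFDerivAt_add_diagonal_exp_neg V w).differentiableAt
    (posDef_add_diagonal_exp_neg hV w).det_pos.ne', fderiv_add_diagonal_exp_neg_single]
  simp [trace, Pi.single_apply, mul_comm]

theorem fderiv_fderiv_log_det_add_diagonal_exp_neg {V : Matrix n n ℝ} (hV : V.PosSemidef)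
    (u : n → ℝ) (i j : n) :
    fderiv ℝ (fun v => fderiv ℝ (fun w => log (V + diagonal fun k => exp (-w k)).det) v
      (Pi.single j 1)) u (Pi.single i 1)
      = (((diagonal fun k => exp (-u k)) - (diagonal fun k => exp (-u k)) *
          (V + diagonal fun k => exp (-u k))⁻¹ * (diagonal fun k => exp (-u k))) ⊙
          (V + diagonal fun k => exp (-u k))⁻¹) i j := by
  have hM := (hasFDerivAt_add_diagonal_exp_neg V u).differentiableAt
  have hdet : IsUnit (V + diagonal fun k => exp (-u k)).det :=
    (posDef_add_diagonal_exp_neg hV u).det_pos.ne'.isUnit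
  have hinv := hM.matrix_inv hdet
  have hexp : fderiv ℝ (fun v : n → ℝ => exp (-v j)) u (Pi.single i 1)
      = -(exp (-u j) * Pi.single (M := fun _ => ℝ) i 1 j) := by
    rw [((hasFDerivAt_apply j u).fun_neg.exp).fderiv]
    simp
  have hsymm : (V + diagonal fun k => exp (-u k))⁻¹ j i = (V + diagonal fun k => exp (-u k))⁻¹ i j :=
    (posDef_add_diagonal_exp_neg hV u).isHermitian.inv.apply i j
  simp only [fderiv_log_det_add_diagonal_exp_neg hV]
  rw [fderiv_fun_neg, fderiv_fun_mul (by fun_prop) (hinv.matrix_apply j j)]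
  simp only [_root_.neg_apply, _root_.add_apply, _root_.smul_apply, smul_eq_mul]
  rw [fderiv_matrix_apply hinv, fderiv_matrix_inv_apply hM hdet,
    fderiv_add_diagonal_exp_neg_single, hexp]
  by_cases hij : i = j
  · subst hij
    simp [mul_apply, diagonal_apply, Pi.single_apply]
    ring
  · simp [mul_apply, diagonal_apply, Pi.single_apply, hij, hsymm]
    ring

end

theorem hessian_logdet_hadamard {p : ℕ} (V : Matrix (Fin p) (Fin p) ℝ) (hV : V.PosSemidef)
    (u : Fin p → ℝ) :
    (∀ i j, fderiv ℝ (fun v : Fin p → ℝ =>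
        fderiv ℝ (fun w : Fin p → ℝ =>
          Real.log (Matrix.det (V + Matrix.diagonal (fun k => Real.exp (-w k))))) v
          (Pi.single j 1)) u (Pi.single i 1)
      = (Matrix.hadamard
          (V * (Matrix.diagonal (fun k => Real.exp (u k)) * V + 1)⁻¹)
          ((Matrix.diagonal (fun k => Real.exp (-u k)) + V)⁻¹)) i j) ∧
    (∀ A B : Matrix (Fin p) (Fin p) ℝ, A.PosSemidef → B.PosSemidef →
      (Matrix.hadamard A B).PosSemidef) := by
  refine ⟨fun i j => ?_, fun A B hA hB => hA.hadamard hB⟩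
  have hED : (diagonal fun k => exp (u k)) * (diagonal fun k => exp (-u k)) = 1 := by
    simp [diagonal_mul_diagonal, ← exp_add]
  rw [fderiv_fderiv_log_det_add_diagonal_exp_neg hV, add_comm (diagonal _) V,
    mul_inv_mul_add_one_eq_sub hED (posDef_add_diagonal_exp_neg hV u).det_pos.ne'.isUnit]
end

section
/- Define F(u) = z^T e^{-u} + (1/2) log det(X diag(e^u) X^T + σ² I) + (1/2)(u − b1)^T K^{-1} (u − b1) for fixed z with nonnegative entries, X ∈ ℝ^{n×p}, σ² > 0, b ∈ ℝ, and K positive definite. Then F is coercive: F(u) → ∞ as ‖u‖ → ∞. -/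
/-!
The first two terms of `F` are bounded below uniformly in `u`: the first is nonnegative, and since
`X diag(e^u) Xᵀ` is positive semidefinite, every eigenvalue of `X diag(e^u) Xᵀ + σ² I` is at least
`σ²`, so its log-determinant is at least `n log σ²`. Hence
`F u ≥ (n/2) log σ² + (c/2) ‖u - b 1‖²`, where `c > 0` is the least eigenvalue of `K⁻¹`.
-/

open Matrix
open scoped MatrixOrder

namespace Matrix

variable {ι : Type*} [Fintype ι] [DecidableEq ι]

lemma IsHermitian.le_eigenvalues_of_smul_one_le {A : Matrix ι ι ℝ} (hA : A.IsHermitian) {c : ℝ}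
    (h : c • 1 ≤ A) (i : ι) : c ≤ hA.eigenvalues i := by
  rw [← Algebra.algebraMap_eq_smul_one, algebraMap_le_iff_le_spectrum hA.isSelfAdjoint] at h
  exact h _ (hA.eigenvalues_mem_spectrum_real i)

lemma pow_card_le_det_of_smul_one_le {A : Matrix ι ι ℝ} {c : ℝ} (hc : 0 ≤ c) (h : c • 1 ≤ A) :
    c ^ Fintype.card ι ≤ A.det := by
  have hA : A.IsHermitian :=
    (nonneg_iff_posSemidef.mp ((smul_nonneg hc zero_le_one).trans h)).isHermitian
  rw [hA.det_eq_prod_eigenvalues, ← Finset.card_univ, ← Finset.prod_const]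
  exact Finset.prod_le_prod (fun _ _ => hc) fun i _ => hA.le_eigenvalues_of_smul_one_le h i

lemma PosDef.exists_pos_smul_one_le {A : Matrix ι ι ℝ} (hA : A.PosDef) :
    ∃ c : ℝ, 0 < c ∧ c • 1 ≤ A := by
  obtain ⟨c, hc, hle⟩ : ∃ c : ℝ, 0 < c ∧ ∀ i, c ≤ hA.1.eigenvalues i := by
    cases isEmpty_or_nonempty ι
    · exact ⟨1, one_pos, isEmptyElim⟩
    · obtain ⟨i₀, hi₀⟩ := Finite.exists_min hA.1.eigenvalues
      exact ⟨_, hA.eigenvalues_pos i₀, hi₀⟩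
  refine ⟨c, hc, ?_⟩
  rw [← Algebra.algebraMap_eq_smul_one, algebraMap_le_iff_le_spectrum hA.1.isSelfAdjoint,
    hA.1.spectrum_real_eq_range_eigenvalues]
  rintro _ ⟨i, rfl⟩
  exact hle i

lemma mul_dotProduct_self_le_of_smul_one_le {A : Matrix ι ι ℝ} {c : ℝ} (h : c • 1 ≤ A)
    (x : ι → ℝ) : c * (x ⬝ᵥ x) ≤ x ⬝ᵥ A *ᵥ x := by
  simpa only [star_trivial, RCLike.re_to_real, sub_mulVec, smul_mulVec, one_mulVec,
    dotProduct_sub, dotProduct_smul, smul_eq_mul, sub_nonneg] using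
    (le_iff.mp h).re_dotProduct_nonneg x

end Matrix

lemma sq_norm_le_dotProduct_self {ι : Type*} [Fintype ι] (v : ι → ℝ) : ‖v‖ ^ 2 ≤ v ⬝ᵥ v := by
  have hv : 0 ≤ v ⬝ᵥ v := Finset.sum_nonneg fun i _ => mul_self_nonneg (v i)
  refine (Real.le_sqrt (norm_nonneg v) hv).mp
    ((pi_norm_le_iff_of_nonneg (Real.sqrt_nonneg _)).mpr fun i => Real.abs_le_sqrt ?_)
  simpa only [dotProduct, sq] using
    Finset.single_le_sum (fun j _ => mul_self_nonneg (v j)) (Finset.mem_univ i)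

lemma exists_lt_of_le_add_mul_sq_norm_sub {E : Type*} [SeminormedAddCommGroup E] {f : E → ℝ}
    {C a : ℝ} (ha : 0 < a) (w : E) (hf : ∀ u, C + a * ‖u - w‖ ^ 2 ≤ f u) (M : ℝ) :
    ∃ R, ∀ u, R < ‖u‖ → M < f u := by
  refine ⟨‖w‖ + √(|M - C| / a), fun u hu => ?_⟩
  have hdist : √(|M - C| / a) < ‖u - w‖ := by linarith [norm_sub_norm_le u w]
  have hsq : |M - C| < a * ‖u - w‖ ^ 2 := by
    rw [← div_lt_iff₀' ha]
    exact Real.lt_sq_of_sqrt_lt hdist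
  linarith [le_abs_self (M - C), hf u]

theorem auxiliary_cost_coercive {n p : ℕ} (X : Matrix (Fin n) (Fin p) ℝ) (σ2 : ℝ)
    (hσ : 0 < σ2) (z : Fin p → ℝ) (hz : ∀ i, 0 ≤ z i) (b : ℝ)
    (K : Matrix (Fin p) (Fin p) ℝ) (hK : K.PosDef) :
    ∀ M : ℝ, ∃ R : ℝ, ∀ u : Fin p → ℝ, R < ‖u‖ →
      M < z ⬝ᵥ (fun i => Real.exp (-u i))
          + (1 / 2) * Real.log (Matrix.det
              (X * Matrix.diagonal (fun i => Real.exp (u i)) * Xᵀ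
                + σ2 • (1 : Matrix (Fin n) (Fin n) ℝ)))
          + (1 / 2) * ((u - fun _ => b) ⬝ᵥ K⁻¹.mulVec (u - fun _ => b)) := by
  obtain ⟨c, hc, hcK⟩ := hK.inv.exists_pos_smul_one_le
  refine exists_lt_of_le_add_mul_sq_norm_sub (C := (1 / 2) * Real.log (σ2 ^ n)) (half_pos hc)
    (fun _ => b) fun u => ?_
  have hexp : 0 ≤ z ⬝ᵥ fun i => Real.exp (-u i) :=
    dotProduct_nonneg_of_nonneg hz fun i => (Real.exp_pos _).le
  have hdet : σ2 ^ n ≤ det (X * diagonal (fun i => Real.exp (u i)) * Xᵀ + σ2 • 1) := by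
    have hgram : 0 ≤ X * diagonal (fun i => Real.exp (u i)) * Xᵀ := by
      rw [nonneg_iff_posSemidef, ← conjTranspose_eq_transpose_of_trivial]
      exact (posSemidef_diagonal_iff.mpr fun _ => (Real.exp_pos _).le).mul_mul_conjTranspose_same _
    simpa only [Fintype.card_fin] using
      pow_card_le_det_of_smul_one_le hσ.le (le_add_of_nonneg_left hgram)
  have hquad : c * ‖u - fun _ => b‖ ^ 2 ≤ (u - fun _ => b) ⬝ᵥ K⁻¹ *ᵥ (u - fun _ => b) :=
    (mul_le_mul_of_nonneg_left (sq_norm_le_dotProduct_self _) hc.le).trans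
      (mul_dotProduct_self_le_of_smul_one_le hcK _)
  have hlog := Real.log_le_log (pow_pos hσ n) hdet
  linarith
end

section
/- In the iterative scheme where u^{k+1} minimizes the auxiliary cost F(u, z^k) = (z^k)^T h(u) − L_h*(z^k) + L₁(u) + L₃(u) with z^k = ∇Φ(η)|_{η = h(u^k)}, the objective L(u) = Φ(h(u)) + L₁(u) + L₃(u) is monotonically nonincreasing: L(u^{k+1}) ≤ L(u^k), with strict inequality unless u^k is a minimizer of F(·, z^k). -/
/-!
A majorize–minimize step: `F(·, zᵏ)` lies above `L` everywhere and touches it at `uᵏ`, so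
`L(uᵏ⁺¹) ≤ F(uᵏ⁺¹, zᵏ) ≤ F(uᵏ, zᵏ) = L(uᵏ)`, and the middle inequality is strict as soon as
`uᵏ` does not minimize `F(·, zᵏ)`.
-/

open Matrix

section Surrogate

variable {α β : Type*} {f g : α → β} {x₀ x₁ : α}

theorem le_of_surrogate_of_forall_le [Preorder β] (hfg : ∀ x, f x ≤ g x) (htouch : g x₀ = f x₀)
    (hmin : ∀ w, g x₁ ≤ g w) : f x₁ ≤ f x₀ :=
  calc f x₁ ≤ g x₁ := hfg x₁
    _ ≤ g x₀ := hmin x₀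
    _ = f x₀ := htouch

theorem lt_of_surrogate_of_forall_le [LinearOrder β] (hfg : ∀ x, f x ≤ g x)
    (htouch : g x₀ = f x₀) (hmin : ∀ w, g x₁ ≤ g w) (hnot : ¬ ∀ w, g x₀ ≤ g w) :
    f x₁ < f x₀ := by
  obtain ⟨w, hw⟩ : ∃ w, g w < g x₀ := by simpa using hnot
  calc f x₁ ≤ g x₁ := hfg x₁
    _ ≤ g w := hmin w
    _ < g x₀ := hw
    _ = f x₀ := htouch

end Surrogate

/-- Monotone descent of the two-stage convex relaxation: if `u'` minimizes the auxiliary cost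
`F(·, z)` with `z = ∇Φ(h uᵏ)`, where `zᵀ h(u) − L*(z) ≥ Φ(h u)` for all `u, z`, with equality
at `z = ∇Φ(h u)`, then the objective `L(u) = Φ(h u) + L₁(u) + L₃(u)` satisfies
`L(u') ≤ L(uᵏ)`, strictly unless `uᵏ` itself minimizes `F(·, z)`. -/
theorem mm_monotone_descent {p q : ℕ}
    (h : (Fin p → ℝ) → (Fin q → ℝ)) (Φ : (Fin q → ℝ) → ℝ)
    (gradΦ : (Fin q → ℝ) → (Fin q → ℝ)) (Lstar : (Fin q → ℝ) → ℝ)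
    (L₁ L₃ : (Fin p → ℝ) → ℝ)
    (hbound : ∀ (u : Fin p → ℝ) (z : Fin q → ℝ),
      Φ (h u) ≤ z ⬝ᵥ h u - Lstar z)
    (htight : ∀ u : Fin p → ℝ,
      gradΦ (h u) ⬝ᵥ h u - Lstar (gradΦ (h u)) = Φ (h u))
    (F : (Fin p → ℝ) → (Fin q → ℝ) → ℝ)
    (hF : ∀ u z, F u z = z ⬝ᵥ h u - Lstar z + L₁ u + L₃ u)
    (Lobj : (Fin p → ℝ) → ℝ)
    (hL : ∀ u, Lobj u = Φ (h u) + L₁ u + L₃ u)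
    (uk u' : Fin p → ℝ)
    (hmin : ∀ w, F u' (gradΦ (h uk)) ≤ F w (gradΦ (h uk))) :
    Lobj u' ≤ Lobj uk ∧
    (¬ (∀ w, F uk (gradΦ (h uk)) ≤ F w (gradΦ (h uk))) → Lobj u' < Lobj uk) := by
  have hmajor : ∀ u, Lobj u ≤ F u (gradΦ (h uk)) := fun u => by
    rw [hL, hF]
    linarith [hbound u (gradΦ (h uk))]
  have htouch : F uk (gradΦ (h uk)) = Lobj uk := by
    rw [hL, hF, htight]
  exact ⟨le_of_surrogate_of_forall_le hmajor htouch hmin,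
    lt_of_surrogate_of_forall_le hmajor htouch hmin⟩
end
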